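/- Finite approximation: for every compact quantum metric space (A,L) and every ε > 0 there is a compact quantum metric space (B,L_B) with B of finite vector-space dimension and dist_q(A,B) < ε; moreover (B,L_B) can be taken to be a quotient of (A,L), that is, there is a surjective morphism π : A → B with L_B the quotient seminorm of L. -/

import Mathlib

open scoped ENNReal

/-- An order-unit space in the sense of Kadison: a partially ordered real vector
space with a positive order unit `e` satisfying the order-unit property and the
Archimedean property. -/
structure OrderUnitSpace : Type 1 where
  carrier : Type
  [toAddCommGroup : AddCommGroup carrier]
  [toModule : Module ℝ carrier]
  [toPartialOrder : PartialOrder carrier]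
  add_le_add_left' : ∀ a b : carrier, a ≤ b → ∀ c : carrier, c + a ≤ c + b
  smul_nonneg' : ∀ (r : ℝ) (a : carrier), 0 ≤ r → 0 ≤ a → 0 ≤ r • a
  e : carrier
  e_nonneg : 0 ≤ e
  orderUnit : ∀ a : carrier, ∃ r : ℝ, a ≤ r • e
  arch : ∀ a : carrier, (∀ r : ℝ, 0 < r → a ≤ r • e) → a ≤ 0

attribute [instance] OrderUnitSpace.toAddCommGroup OrderUnitSpace.toModule
  OrderUnitSpace.toPartialOrder

/-- The topology generated by the open balls of a distance function. -/
def ballTopology {S : Type*} (ρ : S → S → ℝ≥0∞) : TopologicalSpace S :=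
  TopologicalSpace.generateFrom
    {U : Set S | ∃ (μ : S) (ε : ℝ≥0∞), 0 < ε ∧ U = {ν | ρ μ ν < ε}}

/-- The quotient seminorm of `L` along the surjection `π`. -/
noncomputable def quotientSeminorm {α β : Type*} (π : α → β) (L : α → ℝ) (b : β) : ℝ :=
  sInf {r : ℝ | ∃ a, π a = b ∧ L a = r}

/-- `L` induces `LB` via `π`, i.e. `LB` is the quotient seminorm of `L` for `π`. -/
def Induces {α β : Type*} (π : α → β) (L : α → ℝ) (LB : β → ℝ) : Prop :=
  ∀ b, LB b = quotientSeminorm π L b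

/-- Hausdorff distance between two subsets with respect to a distance function. -/
noncomputable def hausdorffDistWith {S : Type*} (ρ : S → S → ℝ≥0∞) (T U : Set S) : ℝ≥0∞ :=
  max (⨆ t ∈ T, ⨅ u ∈ U, ρ t u) (⨆ u ∈ U, ⨅ t ∈ T, ρ t u)

namespace OrderUnitSpace

variable (A B : OrderUnitSpace)

theorem le_of_sub_nonneg'' {x y : A.carrier} (h : 0 ≤ y - x) : x ≤ y := by
  have h2 := A.add_le_add_left' 0 (y - x) h x
  have h3 : x + (y - x) = y := by abel
  rw [add_zero, h3] at h2
  exact h2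

theorem smul_e_mono {r s : ℝ} (h : r ≤ s) : r • A.e ≤ s • A.e := by
  apply A.le_of_sub_nonneg''
  have h3 : s • A.e - r • A.e = (s - r) • A.e := by rw [sub_smul]
  rw [h3]
  exact A.smul_nonneg' _ _ (by linarith) A.e_nonneg

/-- The order-unit norm. -/
noncomputable def onorm (a : A.carrier) : ℝ :=
  sInf {r : ℝ | -(r • A.e) ≤ a ∧ a ≤ r • A.e}

/-- A state: a unital positive linear functional. -/
def IsState (μ : A.carrier →ₗ[ℝ] ℝ) : Prop :=
  μ A.e = 1 ∧ ∀ a : A.carrier, 0 ≤ a → 0 ≤ μ a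

/-- The state space. -/
def State : Type := {μ : A.carrier →ₗ[ℝ] ℝ // A.IsState μ}

/-- The weak-* topology on the state space. -/
instance : TopologicalSpace A.State :=
  TopologicalSpace.induced (fun μ : A.State => (μ.1 : A.carrier → ℝ)) Pi.topologicalSpace

/-- The metric `ρ_L` on the state space defined by a seminorm `L`. -/
noncomputable def rho (L : Seminorm ℝ A.carrier) (μ ν : A.State) : ℝ≥0∞ :=
  ⨆ a : {a : A.carrier // L a ≤ 1}, ENNReal.ofReal |μ.1 a.1 - ν.1 a.1|

/-- A Lipschitz seminorm: its null space is exactly `ℝ e`. -/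
def IsLipschitz (L : Seminorm ℝ A.carrier) : Prop :=
  ∀ a : A.carrier, L a = 0 ↔ ∃ t : ℝ, a = t • A.e

/-- A Lip-norm: a Lipschitz seminorm whose metric `ρ_L` induces the weak-* topology. -/
def IsLipNorm (L : Seminorm ℝ A.carrier) : Prop :=
  A.IsLipschitz L ∧ ballTopology (A.rho L) = (inferInstance : TopologicalSpace A.State)

/-- The diameter of the state space for `ρ_L`. -/
noncomputable def diam (L : Seminorm ℝ A.carrier) : ℝ≥0∞ :=
  ⨆ (μ : A.State) (ν : A.State), A.rho L μ ν

/-- The radius: half the diameter. -/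
noncomputable def radius (L : Seminorm ℝ A.carrier) : ℝ≥0∞ := A.diam L / 2

/-- Morphism of order-unit spaces: a unital positive linear map. -/
def IsMorphism (f : A.carrier →ₗ[ℝ] B.carrier) : Prop :=
  f A.e = B.e ∧ ∀ a : A.carrier, 0 ≤ a → 0 ≤ f a

/-- Pull back a state along a morphism; this is `S(π)`. -/
noncomputable def pullState (f : A.carrier →ₗ[ℝ] B.carrier) (hf : A.IsMorphism B f)
    (μ : B.State) : A.State :=
  ⟨(μ.1).comp f, by
    constructor
    · rw [LinearMap.comp_apply, hf.1]; exact μ.2.1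
    · intro a ha; exact μ.2.2 _ (hf.2 a ha)⟩

/-- The direct sum `A ⊕ B` as an order-unit space. -/
@[reducible] def prod : OrderUnitSpace where
  carrier := A.carrier × B.carrier
  add_le_add_left' := by
    intro a b hab c
    rw [Prod.le_def] at hab ⊢
    exact ⟨A.add_le_add_left' _ _ hab.1 _, B.add_le_add_left' _ _ hab.2 _⟩
  smul_nonneg' := by
    intro r a hr ha
    rw [Prod.le_def] at ha ⊢
    exact ⟨A.smul_nonneg' r a.1 hr ha.1, B.smul_nonneg' r a.2 hr ha.2⟩
  e := (A.e, B.e)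
  e_nonneg := by
    rw [Prod.le_def]
    exact ⟨A.e_nonneg, B.e_nonneg⟩
  orderUnit := by
    intro a
    obtain ⟨r₁, h1⟩ := A.orderUnit a.1
    obtain ⟨r₂, h2⟩ := B.orderUnit a.2
    refine ⟨max r₁ r₂, ?_⟩
    rw [Prod.le_def]
    exact ⟨le_trans h1 (A.smul_e_mono (le_max_left _ _)),
      le_trans h2 (B.smul_e_mono (le_max_right _ _))⟩
  arch := by
    intro a h
    rw [Prod.le_def]
    exact ⟨A.arch a.1 fun r hr => ((Prod.le_def.mp (h r hr)).1),
      B.arch a.2 fun r hr => ((Prod.le_def.mp (h r hr)).2)⟩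

/-- The embedding of `S(A)` into `S(A ⊕ B)` dual to the first coordinate projection. -/
noncomputable def leftState (μ : A.State) : (A.prod B).State :=
  ⟨(μ.1).comp (LinearMap.fst ℝ A.carrier B.carrier), by
    constructor
    · exact μ.2.1
    · intro p hp; exact μ.2.2 p.1 hp.1⟩

/-- The embedding of `S(B)` into `S(A ⊕ B)` dual to the second coordinate projection. -/
noncomputable def rightState (ν : B.State) : (A.prod B).State :=
  ⟨(ν.1).comp (LinearMap.snd ℝ A.carrier B.carrier), by
    constructor
    · exact ν.2.1
    · intro p hp; exact ν.2.2 p.2 hp.2⟩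

/-- The set `M(L_A, L_B)` of Lip-norms on `A ⊕ B` inducing `L_A` and `L_B`
via the coordinate projections. -/
def admissible (LA : Seminorm ℝ A.carrier) (LB : Seminorm ℝ B.carrier) :
    Set (Seminorm ℝ (A.prod B).carrier) :=
  {L | (A.prod B).IsLipNorm L ∧
    Induces (Prod.fst : A.carrier × B.carrier → A.carrier) (fun p => L p) (fun a => LA a) ∧
    Induces (Prod.snd : A.carrier × B.carrier → B.carrier) (fun p => L p) (fun b => LB b)}

/-- Quantum Gromov–Hausdorff distance. -/
noncomputable def distq (LA : Seminorm ℝ A.carrier) (LB : Seminorm ℝ B.carrier) : ℝ≥0∞ :=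
  ⨅ L ∈ A.admissible B LA LB,
    hausdorffDistWith ((A.prod B).rho L) (Set.range (A.leftState B)) (Set.range (A.rightState B))

end OrderUnitSpace

/-!
Take a finite `δ`-net `F` of the weak-* compact state space for `ρ_L`, and let `B` be the image of
`A` in `ℝ^F` under evaluation at the states of `F`, with the quotient seminorm `L_B`. A Lipschitz
seminorm is a Lip-norm exactly when its unit ball is totally bounded modulo `ℝ e` for
`a ↦ sup_μ |μ a|`; this property passes to quotients, so `L_B` is a Lip-norm. On `A ⊕ B` the
bridge `max (L a, L_B b, δ⁻¹ ‖a|_F - b‖_∞)` is a Lip-norm inducing `L` and `L_B`. For it, each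
state `μ` of `A` lies within `2δ` of evaluation at a point of `F` that is `δ`-close to `μ`, and
each state `ν` of `B` lies within `δ` of `ν ∘ π`, so `dist_q(A, B) ≤ 2δ`.
-/

open Filter Topology
open scoped NNReal

lemma Metric.exists_finite_forall_dist_lt_of_totallyBounded_image {X E : Type*}
    [PseudoMetricSpace E] {f : X → E} {s : Set X} (hs : TotallyBounded (f '' s)) {ε : ℝ}
    (hε : 0 < ε) : ∃ T ⊆ s, T.Finite ∧ ∀ x ∈ s, ∃ y ∈ T, dist (f x) (f y) < ε := by
  obtain ⟨T, hTs, hT, hcover⟩ := Set.exists_subset_image_finite_and.1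
    (Metric.finite_approx_of_totallyBounded hs ε hε)
  refine ⟨T, hTs, hT, fun x hx => ?_⟩
  obtain ⟨_, ⟨y, hy, rfl⟩, hxy⟩ := Set.mem_iUnion₂.1 (hcover ⟨x, hx, rfl⟩)
  exact ⟨y, hy, hxy⟩

lemma induces_of_forall_le_of_exists_lt {α β : Type*} {π : α → β} {L : α → ℝ} {LB : β → ℝ}
    (hle : ∀ a, LB (π a) ≤ L a) (hlt : ∀ b r, LB b < r → ∃ a, π a = b ∧ L a < r) :
    Induces π L LB := by
  intro b
  have hne : {r | ∃ a, π a = b ∧ L a = r}.Nonempty := by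
    obtain ⟨a, ha, -⟩ := hlt b (LB b + 1) (lt_add_one _)
    exact ⟨L a, a, ha, rfl⟩
  refine le_antisymm (le_csInf hne ?_) (le_of_forall_gt_imp_ge_of_dense fun r hr => ?_)
  · rintro _ ⟨a, rfl, rfl⟩
    exact hle a
  · obtain ⟨a, ha, har⟩ := hlt b r hr
    refine (csInf_le (s := {r | ∃ a, π a = b ∧ L a = r}) ⟨LB b, ?_⟩ ⟨a, ha, rfl⟩).trans har.le
    rintro _ ⟨a', rfl, rfl⟩
    exact hle a'

section QuotientSeminorm

variable {E E' : Type*} [AddCommGroup E] [Module ℝ E] [AddCommGroup E'] [Module ℝ E']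
  (L : Seminorm ℝ E) {π : E →ₗ[ℝ] E'}

lemma quotientSeminorm_le (a : E) : quotientSeminorm π (fun x => L x) (π a) ≤ L a := by
  refine csInf_le ⟨0, ?_⟩ ⟨a, rfl, rfl⟩
  rintro _ ⟨x, -, rfl⟩
  exact apply_nonneg L x

lemma le_quotientSeminorm (hπ : Function.Surjective π) {b : E'} {r : ℝ}
    (h : ∀ a, π a = b → r ≤ L a) : r ≤ quotientSeminorm π (fun x => L x) b := by
  obtain ⟨a₀, rfl⟩ := hπ b
  refine le_csInf ⟨_, a₀, rfl, rfl⟩ ?_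
  rintro _ ⟨a, ha, rfl⟩
  exact h a ha

lemma exists_lt_of_quotientSeminorm_lt (hπ : Function.Surjective π) {b : E'} {r : ℝ}
    (h : quotientSeminorm π (fun x => L x) b < r) : ∃ a, π a = b ∧ L a < r := by
  obtain ⟨a₀, rfl⟩ := hπ b
  have hne : {r | ∃ a, π a = π a₀ ∧ L a = r}.Nonempty := ⟨_, a₀, rfl, rfl⟩
  obtain ⟨_, ⟨a, ha, rfl⟩, hlt⟩ := exists_lt_of_csInf_lt hne h
  exact ⟨a, ha, hlt⟩

noncomputable def Seminorm.quotient (hπ : Function.Surjective π) : Seminorm ℝ E' :=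
  Seminorm.ofSMulLE (quotientSeminorm π fun x => L x)
    (le_antisymm (by simpa using quotientSeminorm_le L (π := π) 0)
      (le_quotientSeminorm L hπ fun a _ => apply_nonneg L a))
    (fun b₁ b₂ => le_of_forall_pos_le_add fun ε hε => by
      obtain ⟨a₁, rfl, h₁⟩ := exists_lt_of_quotientSeminorm_lt L hπ
        (lt_add_of_pos_right (quotientSeminorm π (fun x => L x) b₁) (half_pos hε))
      obtain ⟨a₂, rfl, h₂⟩ := exists_lt_of_quotientSeminorm_lt L hπ
        (lt_add_of_pos_right (quotientSeminorm π (fun x => L x) b₂) (half_pos hε))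
      have := (quotientSeminorm_le L (π := π) (a₁ + a₂)).trans (map_add_le_add L a₁ a₂)
      rw [map_add] at this
      linarith)
    (fun c b => by
      rcases eq_or_ne c 0 with rfl | hc
      · simpa using quotientSeminorm_le L (π := π) 0
      · rw [mul_comm, ← div_le_iff₀ (norm_pos_iff.2 hc)]
        refine le_quotientSeminorm L hπ fun a ha => ?_
        rw [div_le_iff₀ (norm_pos_iff.2 hc), mul_comm, ← map_smul_eq_mul, ← ha, ← map_smul]
        exact quotientSeminorm_le L (c • a))

end QuotientSeminorm

lemma hausdorffDistWith_le {S : Type*} {ρ : S → S → ℝ≥0∞} {T U : Set S} {r : ℝ≥0∞}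
    (hT : ∀ t ∈ T, ∃ u ∈ U, ρ t u ≤ r) (hU : ∀ u ∈ U, ∃ t ∈ T, ρ t u ≤ r) :
    hausdorffDistWith ρ T U ≤ r := by
  refine max_le (iSup₂_le fun t ht => ?_) (iSup₂_le fun u hu => ?_)
  · obtain ⟨u, hu, h⟩ := hT t ht
    exact (iInf₂_le u hu).trans h
  · obtain ⟨t, ht, h⟩ := hU u hu
    exact (iInf₂_le t ht).trans h

namespace OrderUnitSpace

section Positive

variable {A : OrderUnitSpace}

lemma sub_nonneg_of_le {x y : A.carrier} (h : x ≤ y) : 0 ≤ y - x := by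
  have h' := A.add_le_add_left' x y h (-x)
  rwa [neg_add_cancel, neg_add_eq_sub] at h'

lemma apply_le_mul_of_le_smul_e {φ : A.carrier →ₗ[ℝ] ℝ} (hφ : ∀ a, 0 ≤ a → 0 ≤ φ a)
    {z : A.carrier} {r : ℝ} (h : z ≤ r • A.e) : φ z ≤ r * φ A.e := by
  have h0 := hφ _ (sub_nonneg_of_le h)
  rw [map_sub, map_smul, smul_eq_mul] at h0
  linarith

lemma exists_abs_le_smul_e (z : A.carrier) : ∃ r : ℝ, z ≤ r • A.e ∧ -z ≤ r • A.e := by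
  obtain ⟨r₁, h₁⟩ := A.orderUnit z
  obtain ⟨r₂, h₂⟩ := A.orderUnit (-z)
  exact ⟨max r₁ r₂, h₁.trans (A.smul_e_mono (le_max_left _ _)),
    h₂.trans (A.smul_e_mono (le_max_right _ _))⟩

lemma abs_apply_le_mul_of_le_smul_e {φ : A.carrier →ₗ[ℝ] ℝ} (hφ : ∀ a, 0 ≤ a → 0 ≤ φ a)
    {z : A.carrier} {r : ℝ} (h₁ : z ≤ r • A.e) (h₂ : -z ≤ r • A.e) : |φ z| ≤ r * φ A.e := by
  have := apply_le_mul_of_le_smul_e hφ h₂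
  rw [map_neg] at this
  exact abs_le.2 ⟨by linarith, apply_le_mul_of_le_smul_e hφ h₁⟩

lemma State.abs_apply_le (μ : A.State) {z : A.carrier} {r : ℝ} (h₁ : z ≤ r • A.e)
    (h₂ : -z ≤ r • A.e) : |μ.1 z| ≤ r := by
  simpa [μ.2.1] using abs_apply_le_mul_of_le_smul_e μ.2.2 h₁ h₂

lemma exists_forall_abs_state_apply_le (z : A.carrier) :
    ∃ r : ℝ, ∀ μ : A.State, |μ.1 z| ≤ r := by
  obtain ⟨r, h₁, h₂⟩ := exists_abs_le_smul_e z
  exact ⟨r, fun μ => μ.abs_apply_le h₁ h₂⟩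

/-- A positive functional is a multiple `φ e` of a state, or vanishes when `φ e = 0`. -/
lemma abs_apply_le_mul_of_forall_state {φ : A.carrier →ₗ[ℝ] ℝ} (hφ : ∀ a, 0 ≤ a → 0 ≤ φ a)
    {z : A.carrier} {γ : ℝ} (hz : ∀ μ : A.State, |μ.1 z| ≤ γ) : |φ z| ≤ φ A.e * γ := by
  rcases (hφ _ A.e_nonneg).eq_or_lt with h0 | hpos
  · obtain ⟨r, h₁, h₂⟩ := exists_abs_le_smul_e z
    have := abs_apply_le_mul_of_le_smul_e hφ h₁ h₂
    rw [← h0, mul_zero, abs_nonpos_iff] at this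
    simp [this, ← h0]
  · let μ : A.State := ⟨(φ A.e)⁻¹ • φ, by simp [hpos.ne'],
      fun a ha => mul_nonneg (inv_nonneg.2 hpos.le) (hφ a ha)⟩
    have := hz μ
    simp only [μ, LinearMap.smul_apply, smul_eq_mul, abs_mul, abs_inv, abs_of_pos hpos] at this
    rwa [inv_mul_le_iff₀ hpos] at this

lemma abs_prod_state_apply_le {B : OrderUnitSpace} (Ω : (A.prod B).State) {z : A.carrier}
    {w : B.carrier} {γ : ℝ} (hz : ∀ μ : A.State, |μ.1 z| ≤ γ)
    (hw : ∀ ν : B.State, |ν.1 w| ≤ γ) : |Ω.1 (z, w)| ≤ γ := by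
  have hpos : ∀ p : (A.prod B).carrier, 0 ≤ p → 0 ≤ Ω.1 p := Ω.2.2
  have hz' := abs_apply_le_mul_of_forall_state (φ := Ω.1.comp (LinearMap.inl ℝ _ _))
    (fun a ha => hpos _ ⟨ha, le_rfl⟩) hz
  have hw' := abs_apply_le_mul_of_forall_state (φ := Ω.1.comp (LinearMap.inr ℝ _ _))
    (fun b hb => hpos _ ⟨le_rfl, hb⟩) hw
  have he : Ω.1 (A.e, 0) + Ω.1 (0, B.e) = 1 := by
    rw [← map_add, Prod.mk_add_mk, add_zero, zero_add]; exact Ω.2.1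
  have hzw : Ω.1 (z, w) = Ω.1 (z, 0) + Ω.1 (0, w) := by
    rw [← map_add, Prod.mk_add_mk, add_zero, zero_add]
  simp only [LinearMap.comp_apply, LinearMap.inl_apply, LinearMap.inr_apply] at hz' hw'
  calc |Ω.1 (z, w)| ≤ |Ω.1 (z, 0)| + |Ω.1 (0, w)| := hzw ▸ abs_add_le _ _
    _ ≤ Ω.1 (A.e, 0) * γ + Ω.1 (0, B.e) * γ := add_le_add hz' hw'
    _ = γ := by rw [← add_mul, he, one_mul]

end Positive

section Rho

variable {A : OrderUnitSpace} (L : Seminorm ℝ A.carrier)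

lemma rho_self (μ : A.State) : A.rho L μ μ = 0 := by
  simp [rho]

lemma rho_comm (μ ν : A.State) : A.rho L μ ν = A.rho L ν μ := by
  simp only [rho, abs_sub_comm]

lemma ofReal_abs_sub_le_rho (μ ν : A.State) {a : A.carrier} (ha : L a ≤ 1) :
    ENNReal.ofReal |μ.1 a - ν.1 a| ≤ A.rho L μ ν :=
  le_iSup (fun x : {a : A.carrier // L a ≤ 1} => ENNReal.ofReal |μ.1 x.1 - ν.1 x.1|) ⟨a, ha⟩

lemma rho_le_ofReal {μ ν : A.State} {r : ℝ}
    (h : ∀ a, L a ≤ 1 → |μ.1 a - ν.1 a| ≤ r) : A.rho L μ ν ≤ ENNReal.ofReal r :=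
  iSup_le fun a => ENNReal.ofReal_le_ofReal (h a.1 a.2)

lemma rho_triangle (μ ν σ : A.State) : A.rho L μ σ ≤ A.rho L μ ν + A.rho L ν σ := by
  refine iSup_le fun a => ?_
  calc ENNReal.ofReal |μ.1 a.1 - σ.1 a.1|
      ≤ ENNReal.ofReal (|μ.1 a.1 - ν.1 a.1| + |ν.1 a.1 - σ.1 a.1|) :=
        ENNReal.ofReal_le_ofReal (abs_sub_le _ _ _)
    _ ≤ ENNReal.ofReal |μ.1 a.1 - ν.1 a.1| + ENNReal.ofReal |ν.1 a.1 - σ.1 a.1| :=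
        ENNReal.ofReal_add_le
    _ ≤ A.rho L μ ν + A.rho L ν σ :=
        add_le_add (ofReal_abs_sub_le_rho L μ ν a.2) (ofReal_abs_sub_le_rho L ν σ a.2)

variable {L}

lemma abs_sub_le_toReal_rho_mul (hL : A.IsLipschitz L) {μ ν : A.State}
    (hμν : A.rho L μ ν ≠ ⊤) (x : A.carrier) :
    |μ.1 x - ν.1 x| ≤ (A.rho L μ ν).toReal * L x := by
  rcases (apply_nonneg L x).eq_or_lt with h0 | hpos
  · obtain ⟨t, rfl⟩ := (hL x).1 h0.symm
    simpa [μ.2.1, ν.2.1] using mul_nonneg ENNReal.toReal_nonneg (apply_nonneg L _)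
  · have h := ENNReal.toReal_mono hμν (ofReal_abs_sub_le_rho L μ ν (a := (L x)⁻¹ • x)
      (by rw [map_smul_eq_mul, Real.norm_of_nonneg (inv_nonneg.2 hpos.le),
        inv_mul_cancel₀ hpos.ne']))
    rw [ENNReal.toReal_ofReal (abs_nonneg _), map_smul, map_smul, smul_eq_mul, smul_eq_mul,
      ← mul_sub, abs_mul, abs_of_pos (inv_pos.2 hpos), inv_mul_le_iff₀ hpos] at h
    linarith

lemma abs_sub_le_of_rho_lt (hL : A.IsLipschitz L) {μ ν : A.State} {δ : ℝ} (hδ : 0 ≤ δ)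
    (hμν : A.rho L μ ν < ENNReal.ofReal δ) {x : A.carrier} (hx : L x ≤ 1) :
    |μ.1 x - ν.1 x| ≤ δ := by
  have hρ : (A.rho L μ ν).toReal ≤ δ := ENNReal.toReal_le_of_le_ofReal hδ hμν.le
  calc |μ.1 x - ν.1 x| ≤ (A.rho L μ ν).toReal * L x :=
        abs_sub_le_toReal_rho_mul hL hμν.ne_top x
    _ ≤ δ * 1 := mul_le_mul hρ hx (apply_nonneg L x) hδ
    _ = δ := mul_one δ

end Rho

section Compact

variable {A : OrderUnitSpace}

lemma isClosed_range_coe_state : IsClosed (Set.range fun μ : A.State => (μ.1 : A.carrier → ℝ)) := by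
  have h : Set.range (fun μ : A.State => (μ.1 : A.carrier → ℝ)) =
      Set.range (DFunLike.coe : (A.carrier →ₗ[ℝ] ℝ) → A.carrier → ℝ) ∩
        ({f | f A.e = 1} ∩ ⋂ a ∈ {a : A.carrier | 0 ≤ a}, {f | 0 ≤ f a}) := by
    ext f
    constructor
    · rintro ⟨μ, rfl⟩
      exact ⟨⟨μ.1, rfl⟩, μ.2.1, by simpa using μ.2.2⟩
    · rintro ⟨⟨φ, rfl⟩, he, hpos⟩
      exact ⟨⟨φ, he, by simpa using hpos⟩, rfl⟩
  rw [h]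
  exact (LinearMap.isClosed_range_coe A.carrier ℝ (RingHom.id ℝ)).inter
    ((isClosed_eq (continuous_apply _) continuous_const).inter
      (isClosed_biInter fun a _ => isClosed_le continuous_const (continuous_apply a)))

instance : CompactSpace A.State := by
  choose r hr using exists_forall_abs_state_apply_le (A := A)
  refine isCompact_univ_iff.1 ?_
  rw [(Topology.IsInducing.mk rfl : Topology.IsInducing fun μ : A.State => (μ.1 : A.carrier → ℝ))
    |>.isCompact_iff, Set.image_univ]
  exact (isCompact_univ_pi fun a => isCompact_Icc (a := -r a) (b := r a)).of_isClosed_subset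
    isClosed_range_coe_state (by rintro _ ⟨μ, rfl⟩ a -; exact abs_le.1 (hr a μ))

noncomputable def State.segmentSeq (μ ν : A.State) (n : ℕ) : A.State :=
  ⟨(1 - 1 / (n + 1 : ℝ)) • μ.1 + (1 / (n + 1 : ℝ)) • ν.1, by simp [μ.2.1, ν.2.1], fun a ha => by
    have hs : 1 / (n + 1 : ℝ) ≤ 1 := div_le_one_of_le₀ (by simp) (by positivity)
    simpa using add_nonneg (mul_nonneg (sub_nonneg.2 hs) (μ.2.2 a ha))
      (mul_nonneg (by positivity) (ν.2.2 a ha))⟩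

lemma State.tendsto_segmentSeq (μ ν : A.State) : Tendsto (μ.segmentSeq ν) atTop (𝓝 μ) := by
  rw [(Topology.IsInducing.mk rfl : Topology.IsInducing fun μ : A.State => (μ.1 : A.carrier → ℝ))
    |>.tendsto_nhds_iff, tendsto_pi_nhds]
  intro a
  have hs : Tendsto (fun n : ℕ => 1 / ((n : ℝ) + 1)) atTop (𝓝 0) :=
    tendsto_one_div_add_atTop_nhds_zero_nat
  convert (((tendsto_const_nhds (x := (1 : ℝ))).sub hs).mul (tendsto_const_nhds (x := μ.1 a))).add
    (hs.mul (tendsto_const_nhds (x := ν.1 a))) using 1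
  · rfl
  · simp

end Compact


/-- The `M`-unit ball is totally bounded modulo `ℝ e` for the seminorm `a ↦ sup_μ |μ a|`. -/
def TotallyBoundedModUnit (A : OrderUnitSpace) (M : Seminorm ℝ A.carrier) : Prop :=
  ∀ γ : ℝ, 0 < γ → ∃ T : Set A.carrier, T.Finite ∧ ∀ x, M x ≤ 1 →
    ∃ y ∈ T, ∃ t : ℝ, ∀ μ : A.State, |μ.1 x - μ.1 y - t| ≤ γ

section Criterion

variable {A : OrderUnitSpace} {M : Seminorm ℝ A.carrier}

lemma continuous_apply_ballTopology (hM : A.IsLipschitz M) (a : A.carrier) :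
    Continuous[ballTopology (A.rho M), _] fun ν : A.State => ν.1 a := by
  rw [@Metric.continuous_iff' _ _ _ (ballTopology (A.rho M))]
  intro ν₀ ε hε
  have hδ : 0 < ε / (M a + 1) := by positivity
  have hopen : IsOpen[ballTopology (A.rho M)] {ν | A.rho M ν₀ ν < ENNReal.ofReal (ε / (M a + 1))} :=
    TopologicalSpace.isOpen_generateFrom_of_mem ⟨ν₀, _, ENNReal.ofReal_pos.2 hδ, rfl⟩
  filter_upwards [@IsOpen.mem_nhds _ (ballTopology _) _ _ hopen
    (by simpa [rho_self] using hδ)] with ν hν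
  have hρ := ENNReal.toReal_le_of_le_ofReal hδ.le (le_of_lt hν)
  rw [Real.dist_eq, abs_sub_comm]
  calc |ν₀.1 a - ν.1 a| ≤ (A.rho M ν₀ ν).toReal * M a :=
        abs_sub_le_toReal_rho_mul hM hν.ne_top a
    _ ≤ ε / (M a + 1) * M a := mul_le_mul_of_nonneg_right hρ (apply_nonneg M a)
    _ < ε := by
        rw [div_mul_eq_mul_div, div_lt_iff₀ (by positivity)]
        nlinarith [apply_nonneg M a]

lemma ballTopology_le (hM : A.IsLipschitz M) :
    ballTopology (A.rho M) ≤ (inferInstance : TopologicalSpace A.State) :=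
  continuous_iff_le_induced.1
    (@continuous_pi _ _ _ (ballTopology (A.rho M)) _ _ fun a => continuous_apply_ballTopology hM a)

lemma eventually_rho_le (hM : A.TotallyBoundedModUnit M) (ω : A.State) {p : ℝ} (hp : 0 < p) :
    ∀ᶠ ν in 𝓝 ω, A.rho M ω ν ≤ ENNReal.ofReal p := by
  obtain ⟨T, hT, hnet⟩ := hM (p / 3) (by positivity)
  have hcont (y : A.carrier) : Continuous fun ν : A.State => ν.1 y :=
    (continuous_apply y).comp continuous_induced_dom
  filter_upwards [hT.eventually_all.2 fun y _ => (hcont y).continuousAt.eventually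
    (Metric.ball_mem_nhds (ω.1 y) (by positivity : 0 < p / 3))] with ν hν
  refine rho_le_ofReal M fun x hx => ?_
  obtain ⟨y, hy, t, ht⟩ := hnet x hx
  have hω := abs_le.1 (ht ω)
  have hν' := abs_le.1 (ht ν)
  have hy' := abs_lt.1 (hν y hy)
  exact abs_le.2 ⟨by linarith, by linarith⟩

lemma le_ballTopology (hM : A.TotallyBoundedModUnit M) :
    (inferInstance : TopologicalSpace A.State) ≤ ballTopology (A.rho M) := by
  refine le_generateFrom ?_
  rintro _ ⟨ω, ε, -, rfl⟩
  refine isOpen_iff_mem_nhds.2 fun ω' hω' => ?_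
  obtain ⟨p, hp, hpε⟩ := ENNReal.lt_iff_exists_add_pos_lt.1 hω'
  filter_upwards [eventually_rho_le hM ω' (NNReal.coe_pos.2 hp)] with ν hν
  calc A.rho M ω ν ≤ A.rho M ω ω' + A.rho M ω' ν := rho_triangle M ω ω' ν
    _ ≤ A.rho M ω ω' + p := add_le_add le_rfl (by simpa using hν)
    _ < ε := hpε

theorem isLipNorm_of_totallyBoundedModUnit (hM : A.IsLipschitz M)
    (hMT : A.TotallyBoundedModUnit M) : A.IsLipNorm M :=
  ⟨hM, le_antisymm (ballTopology_le hM) (le_ballTopology hMT)⟩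

end Criterion

section LipNorm

variable {A : OrderUnitSpace} {L : Seminorm ℝ A.carrier}

lemma isOpen_setOf_rho_lt (hL : ballTopology (A.rho L) = (inferInstance : TopologicalSpace A.State))
    (μ : A.State) {ε : ℝ≥0∞} (hε : 0 < ε) : IsOpen {ν | A.rho L μ ν < ε} := by
  have h : IsOpen[ballTopology (A.rho L)] {ν | A.rho L μ ν < ε} :=
    TopologicalSpace.isOpen_generateFrom_of_mem ⟨μ, ε, hε, rfl⟩
  rwa [hL] at h

/-- `ρ_L(μ, σₙ) = ρ_L(μ, ν) / (n + 1)` for `σₙ = μ.segmentSeq ν n`, and `σₙ → μ`. -/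
lemma rho_ne_top (hL : ballTopology (A.rho L) = (inferInstance : TopologicalSpace A.State))
    (μ ν : A.State) : A.rho L μ ν ≠ ⊤ := by
  obtain ⟨n, hn⟩ := ((μ.tendsto_segmentSeq ν).eventually
    ((isOpen_setOf_rho_lt hL μ one_pos).mem_nhds (by simp [rho_self]))).exists
  refine ne_top_of_le_ne_top ENNReal.ofReal_ne_top (rho_le_ofReal L (r := n + 1) fun a ha => ?_)
  have h := (ofReal_abs_sub_le_rho L _ _ ha).trans_lt hn
  rw [ENNReal.ofReal_lt_one] at h
  have hσ : μ.1 a - (μ.segmentSeq ν n).1 a = (μ.1 a - ν.1 a) / (n + 1) := by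
    simp only [State.segmentSeq, LinearMap.add_apply, LinearMap.smul_apply, smul_eq_mul]
    field_simp
    ring
  rw [hσ, abs_div, abs_of_pos (by positivity : (0 : ℝ) < n + 1), div_lt_one (by positivity)] at h
  exact h.le

lemma exists_finset_rho_lt
    (hL : ballTopology (A.rho L) = (inferInstance : TopologicalSpace A.State))
    {ε : ℝ≥0∞} (hε : 0 < ε) : ∃ F : Finset A.State, ∀ σ : A.State, ∃ μ ∈ F, A.rho L μ σ < ε := by
  obtain ⟨F, hF⟩ := isCompact_univ.elim_finite_subcover (fun μ : A.State => {ν | A.rho L μ ν < ε})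
    (fun μ => isOpen_setOf_rho_lt hL μ hε)
    (fun σ _ => Set.mem_iUnion.2 ⟨σ, by simp [rho_self, hε]⟩)
  exact ⟨F, fun σ => by simpa using hF (Set.mem_univ σ)⟩

lemma diam_ne_top (hL : ballTopology (A.rho L) = (inferInstance : TopologicalSpace A.State)) :
    A.diam L ≠ ⊤ := by
  obtain ⟨G, hG⟩ := exists_finset_rho_lt hL one_pos
  obtain ⟨D, hD, hGD⟩ : ∃ D : ℝ≥0∞, D ≠ ⊤ ∧ ∀ g ∈ G, ∀ g' ∈ G, A.rho L g g' ≤ D := by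
    refine ⟨G.sup fun g => G.sup fun g' => A.rho L g g', ?_, fun g hg g' hg' => ?_⟩
    · simp only [← lt_top_iff_ne_top, Finset.sup_lt_iff (bot_lt_top : (⊥ : ℝ≥0∞) < ⊤)]
      exact fun g _ g' _ => (rho_ne_top hL g g').lt_top
    · exact Finset.le_sup_of_le hg (Finset.le_sup (f := fun g' => A.rho L g g') hg')
  have hbound : (1 : ℝ≥0∞) + (D + 1) ≠ ⊤ := ENNReal.add_ne_top.2 ⟨ENNReal.one_ne_top,
    ENNReal.add_ne_top.2 ⟨hD, ENNReal.one_ne_top⟩⟩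
  refine ne_top_of_le_ne_top hbound (iSup₂_le fun μ ν => ?_)
  obtain ⟨g, hg, hgμ⟩ := hG μ
  obtain ⟨g', hg', hg'ν⟩ := hG ν
  calc A.rho L μ ν ≤ A.rho L μ g + (A.rho L g g' + A.rho L g' ν) :=
        (rho_triangle L μ g ν).trans (add_le_add le_rfl (rho_triangle L g g' ν))
    _ ≤ 1 + (D + 1) :=
        add_le_add ((rho_comm L μ g).trans_le hgμ.le) (add_le_add (hGD g hg g' hg') hg'ν.le)

/-- Evaluating on a `γ/3`-net `F` of states, relative to a base state `μ₀`, maps the unit ball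
into a bounded, hence totally bounded, subset of `ℝ^F`. -/
theorem IsLipNorm.totallyBoundedModUnit (hL : A.IsLipNorm L) : A.TotallyBoundedModUnit L := by
  intro γ hγ
  rcases isEmpty_or_nonempty A.State with hS | ⟨⟨μ₀⟩⟩
  · exact ⟨{0}, Set.finite_singleton 0, fun x _ => ⟨0, rfl, 0, hS.elim⟩⟩
  obtain ⟨F, hF⟩ := exists_finset_rho_lt hL.2 (ENNReal.ofReal_pos.2 (by positivity : 0 < γ / 3))
  have hdiam (μ ν : A.State) {x : A.carrier} (hx : L x ≤ 1) :
      |μ.1 x - ν.1 x| ≤ (A.diam L).toReal := by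
    have h : ENNReal.ofReal |μ.1 x - ν.1 x| ≤ A.diam L :=
      (ofReal_abs_sub_le_rho L μ ν hx).trans (le_iSup₂ (f := A.rho L) μ ν)
    rwa [← ENNReal.ofReal_toReal (diam_ne_top hL.2),
      ENNReal.ofReal_le_ofReal_iff ENNReal.toReal_nonneg] at h
  let Ψ : A.carrier → (F → ℝ) := fun a ω => ω.1.1 a - μ₀.1 a
  have hbdd : Ψ '' {x | L x ≤ 1} ⊆ Metric.closedBall 0 (A.diam L).toReal := by
    rintro _ ⟨x, hx, rfl⟩
    rw [mem_closedBall_zero_iff, pi_norm_le_iff_of_nonneg ENNReal.toReal_nonneg]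
    exact fun ω => hdiam ω.1 μ₀ hx
  obtain ⟨T, hTs, hT, hnet⟩ := Metric.exists_finite_forall_dist_lt_of_totallyBounded_image
    ((isCompact_closedBall _ _).totallyBounded.subset hbdd) (by positivity : 0 < γ / 3)
  refine ⟨T, hT, fun x hx => ?_⟩
  obtain ⟨y, hyT, hxy⟩ := hnet x hx
  refine ⟨y, hyT, μ₀.1 x - μ₀.1 y, fun Ω => ?_⟩
  obtain ⟨ω, hω, hωΩ⟩ := hF Ω
  have h₁ : |ω.1 x - μ₀.1 x + μ₀.1 y - ω.1 y| ≤ γ / 3 := by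
    simpa [Real.dist_eq, Ψ] using (dist_le_pi_dist (Ψ x) (Ψ y) ⟨ω, hω⟩).trans hxy.le
  have h₂ := abs_le.1 (abs_sub_le_of_rho_lt hL.1 (by positivity) hωΩ hx)
  have h₃ := abs_le.1 (abs_sub_le_of_rho_lt hL.1 (by positivity) hωΩ (hTs hyT))
  have h₁ := abs_le.1 h₁
  exact abs_le.2 ⟨by linarith, by linarith⟩

end LipNorm

section Quotient

variable {A B : OrderUnitSpace} {L : Seminorm ℝ A.carrier} {π : A.carrier →ₗ[ℝ] B.carrier}

lemma pullState_apply (hπ : A.IsMorphism B π) (ν : B.State) (a : A.carrier) :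
    (A.pullState B π hπ ν).1 a = ν.1 (π a) := rfl

lemma TotallyBoundedModUnit.quotient (hL : A.TotallyBoundedModUnit L) (hπ : A.IsMorphism B π)
    (hsurj : Function.Surjective π) : B.TotallyBoundedModUnit (L.quotient hsurj) := by
  intro γ hγ
  obtain ⟨T, hT, hnet⟩ := hL (γ / 2) (half_pos hγ)
  refine ⟨(fun a => π ((2 : ℝ) • a)) '' T, hT.image _, fun b hb => ?_⟩
  obtain ⟨a, rfl, ha⟩ := exists_lt_of_quotientSeminorm_lt L hsurj (hb.trans_lt one_lt_two)
  have hx : L ((2⁻¹ : ℝ) • a) ≤ 1 := by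
    rw [map_smul_eq_mul, Real.norm_of_nonneg (by norm_num)]
    linarith
  obtain ⟨y, hy, t, ht⟩ := hnet _ hx
  refine ⟨π ((2 : ℝ) • y), ⟨y, hy, rfl⟩, 2 * t, fun ν => ?_⟩
  have h := ht (A.pullState B π hπ ν)
  simp only [pullState_apply, map_smul, smul_eq_mul] at h ⊢
  have h2 : ν.1 (π a) - 2 * ν.1 (π y) - 2 * t = 2 * (2⁻¹ * ν.1 (π a) - ν.1 (π y) - t) := by ring
  rw [h2, abs_mul, abs_two]
  linarith

lemma state_apply_eq_of_quotient_eq_zero (hL : A.IsLipNorm L) (hπ : A.IsMorphism B π)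
    (hsurj : Function.Surjective π) {b : B.carrier} (hb : L.quotient hsurj b = 0)
    (ν ν' : B.State) : ν.1 b = ν'.1 b := by
  set μ := A.pullState B π hπ ν
  set μ' := A.pullState B π hπ ν'
  set C := (A.rho L μ μ').toReal + 1
  have hC : 0 < C := by positivity
  have h : |ν.1 b - ν'.1 b| / C ≤ 0 := by
    rw [← hb]
    refine le_quotientSeminorm L hsurj fun a ha => ?_
    rw [div_le_iff₀' hC, ← ha, ← pullState_apply hπ, ← pullState_apply hπ]
    refine (abs_sub_le_toReal_rho_mul hL.1 (rho_ne_top hL.2 μ μ') a).trans ?_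
    exact mul_le_mul_of_nonneg_right (by linarith) (apply_nonneg L a)
  rwa [div_le_iff₀ hC, zero_mul, abs_nonpos_iff, sub_eq_zero] at h

lemma isLipNorm_quotient (hL : A.IsLipNorm L) (hπ : A.IsMorphism B π)
    (hsurj : Function.Surjective π)
    (hsep : ∀ b : B.carrier, (∀ ν ν' : B.State, ν.1 b = ν'.1 b) → ∃ t : ℝ, b = t • B.e) :
    B.IsLipNorm (L.quotient hsurj) := by
  refine isLipNorm_of_totallyBoundedModUnit (fun b => ⟨fun hb => hsep b
    (state_apply_eq_of_quotient_eq_zero hL hπ hsurj hb), ?_⟩)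
    (hL.totallyBoundedModUnit.quotient hπ hsurj)
  rintro ⟨t, rfl⟩
  refine le_antisymm ?_ (apply_nonneg _ _)
  have h := quotientSeminorm_le L (π := π) (t • A.e)
  rwa [map_smul, hπ.1, ((hL.1 _).2 ⟨t, rfl⟩)] at h

end Quotient

section OfSubmodule

variable {ι : Type} [Fintype ι]

@[reducible] def ofSubmodule (V : Submodule ℝ (ι → ℝ)) (hV : 1 ∈ V) : OrderUnitSpace where
  carrier := V
  add_le_add_left' _ _ hab c := Subtype.coe_le_coe.1 fun i =>
    add_le_add le_rfl (Subtype.coe_le_coe.2 hab i)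
  smul_nonneg' r _ hr ha := Subtype.coe_le_coe.1 fun i => mul_nonneg hr (Subtype.coe_le_coe.2 ha i)
  e := ⟨1, hV⟩
  e_nonneg := Subtype.coe_le_coe.1 fun _ => zero_le_one
  orderUnit b := ⟨‖(b : ι → ℝ)‖, Subtype.coe_le_coe.1 fun i => by
    simpa using (le_abs_self (b.1 i)).trans (norm_le_pi_norm (b : ι → ℝ) i)⟩
  arch b h := Subtype.coe_le_coe.1 fun i => le_of_forall_pos_le_add fun r hr => by
    simpa using Subtype.coe_le_coe.2 (h r hr) i

variable {V : Submodule ℝ (ι → ℝ)} {hV : 1 ∈ V}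

lemma State.abs_apply_le_norm (ν : (ofSubmodule V hV).State) (b : (ofSubmodule V hV).carrier) :
    |ν.1 b| ≤ ‖(b : ι → ℝ)‖ := by
  refine ν.abs_apply_le (fun i => ?_) (fun i => ?_)
  · simpa using (abs_le.1 (norm_le_pi_norm (b : ι → ℝ) i)).2
  · simpa using neg_le.1 (abs_le.1 (norm_le_pi_norm (b : ι → ℝ) i)).1

def evalState (i : ι) : (ofSubmodule V hV).State :=
  ⟨(LinearMap.proj i).comp V.subtype, rfl, fun _ hb => hb i⟩

lemma exists_eq_smul_e_of_forall_state_eq (b : (ofSubmodule V hV).carrier)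
    (hb : ∀ ν ν' : (ofSubmodule V hV).State, ν.1 b = ν'.1 b) :
    ∃ t : ℝ, b = t • (ofSubmodule V hV).e := by
  rcases isEmpty_or_nonempty ι with hι | ⟨⟨i₀⟩⟩
  · exact ⟨0, Subtype.ext (funext hι.elim)⟩
  · exact ⟨b.1 i₀, Subtype.ext (funext fun i => by
      simpa [evalState] using hb (evalState i) (evalState i₀))⟩

end OfSubmodule

section EvalImage

variable {A : OrderUnitSpace}

def evalStates (F : Finset A.State) : A.carrier →ₗ[ℝ] (F → ℝ) :=
  LinearMap.pi fun ω => ω.1.1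

lemma one_mem_range_evalStates (F : Finset A.State) :
    (1 : F → ℝ) ∈ LinearMap.range (evalStates F) :=
  ⟨A.e, funext fun ω => ω.1.2.1⟩

@[reducible] noncomputable def evalImage (A : OrderUnitSpace) (F : Finset A.State) :
    OrderUnitSpace :=
  ofSubmodule (LinearMap.range (evalStates F)) (one_mem_range_evalStates F)

instance (F : Finset A.State) : FiniteDimensional ℝ (A.evalImage F).carrier :=
  inferInstanceAs (FiniteDimensional ℝ (LinearMap.range (evalStates F)))

noncomputable def evalProj (F : Finset A.State) : A.carrier →ₗ[ℝ] (A.evalImage F).carrier :=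
  (evalStates F).rangeRestrict

lemma evalProj_surjective (F : Finset A.State) : Function.Surjective (evalProj F) :=
  LinearMap.surjective_rangeRestrict _

lemma coe_evalProj (F : Finset A.State) (a : A.carrier) :
    ((evalProj F a : (A.evalImage F).carrier) : F → ℝ) = evalStates F a := rfl

lemma isMorphism_evalProj (F : Finset A.State) : A.IsMorphism (A.evalImage F) (evalProj F) :=
  ⟨Subtype.ext (funext fun ω => ω.1.2.1), fun _ ha ω => ω.1.2.2 _ ha⟩

theorem isLipNorm_evalImage {L : Seminorm ℝ A.carrier} (hL : A.IsLipNorm L) (F : Finset A.State) :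
    (A.evalImage F).IsLipNorm (L.quotient (evalProj_surjective F)) :=
  isLipNorm_quotient hL (isMorphism_evalProj F) (evalProj_surjective F)
    exists_eq_smul_e_of_forall_state_eq

end EvalImage

section Bridge

variable {A : OrderUnitSpace} (L : Seminorm ℝ A.carrier) (F : Finset A.State)

noncomputable def bridge (δ : ℝ≥0) : Seminorm ℝ (A.prod (A.evalImage F)).carrier :=
  L.comp (LinearMap.fst ℝ _ _) ⊔ (L.quotient (evalProj_surjective F)).comp (LinearMap.snd ℝ _ _) ⊔
    δ⁻¹ • (normSeminorm ℝ (F → ℝ)).comp (evalStates F ∘ₗ LinearMap.fst ℝ _ _ -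
      (LinearMap.range (evalStates F)).subtype ∘ₗ LinearMap.snd ℝ _ _)

lemma bridge_apply (δ : ℝ≥0) (a : A.carrier) (b : (A.evalImage F).carrier) :
    bridge L F δ (a, b) = max (max (L a) (L.quotient (evalProj_surjective F) b))
      ((δ : ℝ)⁻¹ * ‖evalStates F a - (b : F → ℝ)‖) := rfl

lemma le_bridge_fst (δ : ℝ≥0) (a : A.carrier) (b : (A.evalImage F).carrier) :
    L a ≤ bridge L F δ (a, b) :=
  (le_max_left _ _).trans (le_max_left _ _)

lemma le_bridge_snd (δ : ℝ≥0) (a : A.carrier) (b : (A.evalImage F).carrier) :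
    L.quotient (evalProj_surjective F) b ≤ bridge L F δ (a, b) :=
  (le_max_right _ _).trans (le_max_left _ _)

lemma norm_sub_le_mul_bridge {δ : ℝ≥0} (hδ : 0 < δ) (a : A.carrier)
    (b : (A.evalImage F).carrier) :
    ‖evalStates F a - (b : F → ℝ)‖ ≤ δ * bridge L F δ (a, b) := by
  rw [← inv_mul_le_iff₀ (NNReal.coe_pos.2 hδ), bridge_apply]
  exact le_max_right _ _

lemma norm_sub_le_of_bridge_le_one {δ : ℝ≥0} (hδ : 0 < δ) {a : A.carrier}
    {b : (A.evalImage F).carrier} (h : bridge L F δ (a, b) ≤ 1) :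
    ‖evalStates F a - (b : F → ℝ)‖ ≤ δ :=
  (norm_sub_le_mul_bridge L F hδ a b).trans (mul_le_of_le_one_right δ.2 h)

lemma abs_sub_le_of_bridge_le_one {δ : ℝ≥0} (hδ : 0 < δ) {a : A.carrier}
    {b : (A.evalImage F).carrier} (h : bridge L F δ (a, b) ≤ 1) (ω : F) :
    |ω.1.1 a - (b : F → ℝ) ω| ≤ δ := by
  have h' := (norm_le_pi_norm _ ω).trans (norm_sub_le_of_bridge_le_one L F hδ h)
  rwa [Real.norm_eq_abs] at h'

lemma bridge_apply_evalProj (δ : ℝ≥0) (a : A.carrier) : bridge L F δ (a, evalProj F a) = L a := by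
  have hq : L.quotient (evalProj_surjective F) (evalProj F a) ≤ L a := quotientSeminorm_le L a
  rw [bridge_apply, coe_evalProj, sub_self, norm_zero, mul_zero, max_eq_left hq,
    max_eq_left (apply_nonneg L a)]

lemma induces_fst_bridge (δ : ℝ≥0) :
    Induces (Prod.fst : A.carrier × (A.evalImage F).carrier → A.carrier)
      (fun p => bridge L F δ p) (fun a => L a) :=
  induces_of_forall_le_of_exists_lt (fun p => le_bridge_fst L F δ p.1 p.2)
    fun a _ h => ⟨(a, evalProj F a), rfl, (bridge_apply_evalProj L F δ a).trans_lt h⟩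

lemma induces_snd_bridge (δ : ℝ≥0) :
    Induces (Prod.snd : A.carrier × (A.evalImage F).carrier → (A.evalImage F).carrier)
      (fun p => bridge L F δ p) (fun b => L.quotient (evalProj_surjective F) b) := by
  refine induces_of_forall_le_of_exists_lt (fun p => le_bridge_snd L F δ p.1 p.2) fun b r h => ?_
  obtain ⟨a, rfl, ha⟩ := exists_lt_of_quotientSeminorm_lt L (evalProj_surjective F) h
  exact ⟨(a, evalProj F a), rfl, (bridge_apply_evalProj L F δ a).trans_lt ha⟩

lemma smul_e_prod_evalImage (t : ℝ) :
    t • (A.prod (A.evalImage F)).e = (t • A.e, evalProj F (t • A.e)) := by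
  rw [map_smul, (isMorphism_evalProj F).1]
  rfl

variable {L F}

lemma isLipschitz_bridge (hL : A.IsLipschitz L) {δ : ℝ≥0} (hδ : 0 < δ) :
    (A.prod (A.evalImage F)).IsLipschitz (bridge L F δ) := by
  rintro ⟨a, b⟩
  constructor
  · intro h
    obtain ⟨t, rfl⟩ :=
      (hL a).1 (le_antisymm ((le_bridge_fst L F δ a b).trans h.le) (apply_nonneg L a))
    have hb := norm_sub_le_mul_bridge L F hδ (t • A.e) b
    rw [h, mul_zero, norm_le_zero_iff, sub_eq_zero] at hb
    refine ⟨t, ?_⟩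
    rw [smul_e_prod_evalImage]
    exact Prod.ext rfl (Subtype.ext hb.symm)
  · rintro ⟨t, ht⟩
    rw [ht, smul_e_prod_evalImage, bridge_apply_evalProj]
    exact (hL _).2 ⟨t, rfl⟩

/-- `(a, b)` is approximated by `(a', a'|_F + c')`, with `a'` from a net for `L` and `c'` from a
net of the bounded set in which `b - a'|_F - t` lies. -/
lemma totallyBoundedModUnit_bridge (hL : A.TotallyBoundedModUnit L) {δ : ℝ≥0} (hδ : 0 < δ) :
    (A.prod (A.evalImage F)).TotallyBoundedModUnit (bridge L F δ) := by
  intro γ hγ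
  obtain ⟨TA, hTA, hnetA⟩ := hL γ hγ
  obtain ⟨TB, -, hTB, hnetB⟩ := Metric.exists_finite_forall_dist_lt_of_totallyBounded_image
    (f := fun c : (A.evalImage F).carrier => (c : F → ℝ)) (s := {c | ‖(c : F → ℝ)‖ ≤ δ + γ})
    ((isCompact_closedBall (0 : F → ℝ) (δ + γ)).totallyBounded.subset
      (by rintro _ ⟨c, hc, rfl⟩; simpa using hc)) hγ
  refine ⟨Set.image2 (fun a' c' => (a', evalProj F a' + c')) TA TB, hTA.image2 _ hTB, ?_⟩
  rintro ⟨a, b⟩ hab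
  obtain ⟨a', ha', t, ht⟩ := hnetA a ((le_bridge_fst L F δ a b).trans hab)
  set c := b - evalProj F a' - t • (A.evalImage F).e
  have hc : ‖(c : F → ℝ)‖ ≤ δ + γ := by
    refine (pi_norm_le_iff_of_nonneg (by positivity)).2 fun ω => ?_
    have h₁ := abs_le.1 (abs_sub_le_of_bridge_le_one L F hδ hab ω)
    have h₂ := abs_le.1 (ht ω.1)
    have hcω : (c : F → ℝ) ω = (b : F → ℝ) ω - ω.1.1 a' - t * 1 := rfl
    rw [Real.norm_eq_abs, hcω, mul_one, abs_le]
    constructor <;> linarith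
  obtain ⟨c', hc', hcc'⟩ := hnetB c hc
  refine ⟨(a', evalProj F a' + c'), Set.mem_image2_of_mem ha' hc', t, fun Ω => ?_⟩
  have hsplit : Ω.1 (a, b) - Ω.1 (a', evalProj F a' + c') - t =
      Ω.1 (a - a' - t • A.e, c - c') := by
    have hx : (a, b) - (a', evalProj F a' + c') - t • (A.prod (A.evalImage F)).e =
        (a - a' - t • A.e, c - c') := by
      refine Prod.ext rfl ?_
      show b - (evalProj F a' + c') - t • (A.evalImage F).e = c - c'
      simp only [c]
      abel
    rw [← hx, map_sub, map_sub, map_smul, Ω.2.1, smul_eq_mul, mul_one]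
  rw [hsplit]
  refine abs_prod_state_apply_le Ω (fun μ => ?_) (fun ν => ?_)
  · simpa [μ.2.1] using ht μ
  · exact (ν.abs_apply_le_norm _).trans (by simpa [dist_eq_norm] using hcc'.le)

lemma bridge_mem_admissible (hL : A.IsLipNorm L) {δ : ℝ≥0} (hδ : 0 < δ) :
    bridge L F δ ∈ A.admissible (A.evalImage F) L (L.quotient (evalProj_surjective F)) :=
  ⟨isLipNorm_of_totallyBoundedModUnit (isLipschitz_bridge hL.1 hδ)
      (totallyBoundedModUnit_bridge hL.totallyBoundedModUnit hδ),
    induces_fst_bridge L F δ, induces_snd_bridge L F δ⟩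

lemma rho_bridge_leftState_pullState_le {δ : ℝ≥0} (hδ : 0 < δ) (ν : (A.evalImage F).State) :
    (A.prod (A.evalImage F)).rho (bridge L F δ)
      (A.leftState _ (A.pullState _ (evalProj F) (isMorphism_evalProj F) ν))
      (A.rightState _ ν) ≤ δ := by
  refine (rho_le_ofReal _ fun p hp => ?_).trans_eq ENNReal.ofReal_coe_nnreal
  obtain ⟨a, b⟩ := p
  calc |ν.1 (evalProj F a) - ν.1 b| = |ν.1 (evalProj F a - b)| := by rw [map_sub]
    _ ≤ ‖evalStates F a - (b : F → ℝ)‖ := ν.abs_apply_le_norm _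
    _ ≤ δ := norm_sub_le_of_bridge_le_one L F hδ hp

lemma rho_bridge_leftState_rightState_evalState_le (hL : A.IsLipschitz L) {δ : ℝ≥0}
    (hδ : 0 < δ) {μ ω : A.State} (hω : ω ∈ F) (hωμ : A.rho L ω μ < δ) :
    (A.prod (A.evalImage F)).rho (bridge L F δ) (A.leftState _ μ)
      (A.rightState _ (evalState ⟨ω, hω⟩)) ≤ 2 * δ := by
  refine (rho_le_ofReal _ (r := 2 * δ) fun p hp => ?_).trans_eq (by simp [ENNReal.ofReal_mul])
  obtain ⟨a, b⟩ := p
  have h₁ : |ω.1 a - μ.1 a| ≤ δ := abs_sub_le_of_rho_lt hL δ.2 (by simpa using hωμ)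
    ((le_bridge_fst L F δ a b).trans hp)
  have h₂ : |ω.1 a - (b : F → ℝ) ⟨ω, hω⟩| ≤ δ :=
    abs_sub_le_of_bridge_le_one L F hδ hp ⟨ω, hω⟩
  change |μ.1 a - (b : F → ℝ) ⟨ω, hω⟩| ≤ 2 * δ
  rw [abs_le] at h₁ h₂ ⊢
  constructor <;> linarith

theorem distq_evalImage_le (hL : A.IsLipNorm L) {δ : ℝ≥0} (hδ : 0 < δ)
    (hF : ∀ μ : A.State, ∃ ω ∈ F, A.rho L ω μ < δ) :
    A.distq (A.evalImage F) L (L.quotient (evalProj_surjective F)) ≤ 2 * δ := by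
  refine (iInf₂_le _ (bridge_mem_admissible hL hδ)).trans (hausdorffDistWith_le ?_ ?_)
  · rintro _ ⟨μ, rfl⟩
    obtain ⟨ω, hω, hωμ⟩ := hF μ
    exact ⟨_, ⟨evalState ⟨ω, hω⟩, rfl⟩,
      rho_bridge_leftState_rightState_evalState_le hL.1 hδ hω hωμ⟩
  · rintro _ ⟨ν, rfl⟩
    exact ⟨_, ⟨_, rfl⟩, (rho_bridge_leftState_pullState_le hδ ν).trans
      (le_mul_of_one_le_left zero_le one_le_two)⟩

end Bridge

end OrderUnitSpace

open OrderUnitSpace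

/-- **Finite approximation (Theorem 13.1 of Rieffel).** For every compact quantum
metric space `(A, L)` and every `ε > 0` there is a compact quantum metric space
`(B, L_B)` with `B` finite-dimensional and `dist_q(A, B) < ε`; moreover `(B, L_B)`
can be taken to be a quotient of `(A, L)`, i.e. there is a surjective morphism
`π : A → B` with `L_B` the quotient seminorm of `L`. -/
theorem finite_approximation (A : OrderUnitSpace) (L : Seminorm ℝ A.carrier)
    (hL : A.IsLipNorm L) (ε : ℝ≥0∞) (hε : 0 < ε) :
    ∃ (B : OrderUnitSpace) (LB : Seminorm ℝ B.carrier) (π : A.carrier →ₗ[ℝ] B.carrier),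
      FiniteDimensional ℝ B.carrier ∧ B.IsLipNorm LB ∧
      A.IsMorphism B π ∧ Function.Surjective π ∧
      Induces π (fun a => L a) (fun b => LB b) ∧
      A.distq B L LB < ε := by
  obtain ⟨δ, hδ, hδε⟩ := ENNReal.lt_iff_exists_nnreal_btwn.1 (ENNReal.half_pos hε.ne')
  obtain ⟨F, hF⟩ := exists_finset_rho_lt hL.2 hδ
  refine ⟨A.evalImage F, L.quotient (evalProj_surjective F), evalProj F, inferInstance,
    isLipNorm_evalImage hL F, isMorphism_evalProj F, evalProj_surjective F, fun _ => rfl, ?_⟩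
  exact (distq_evalImage_le hL (ENNReal.coe_pos.1 hδ) hF).trans_lt
    (ENNReal.mul_lt_of_lt_div' hδε)
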